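/- arXiv:2207.11868 — 3 statements merged into one kernel-verified Lean document; each statement's English description precedes it below -/
import Mathlib

section
/- Let n ≥ 1 and let m ≥ n. For every list assignment L for the complete graph K_n in which every vertex receives a list of exactly m colors, there exists a proper L-packing of K_n of size m, i.e., there exist m proper L-colorings f_1, …, f_m of K_n such that f_i(v) ≠ f_j(v) whenever 1 ≤ i < j ≤ m and v is a vertex of K_n. -/
lemma multiset_chunks (m : ℕ) : ∀ (K : ℕ) (M : Multiset ℕ), Multiset.card M = K * m →
    ∃ f : Fin K → Multiset ℕ, (∀ j, Multiset.card (f j) = m) ∧ ∑ j, f j = M := by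
  intro K
  induction K with
  | zero =>
    intro M hM
    refine ⟨fun j => 0, fun j => j.elim0, ?_⟩
    simp at hM ⊢
    exact hM.symm
  | succ K ih =>
    intro M hM
    set l := M.toList with hl
    have hlen : l.length = (K + 1) * m := by
      rw [hl, Multiset.length_toList, hM]
    have hm_le : m ≤ l.length := by rw [hlen]; nlinarith
    obtain ⟨f', hf'card, hf'sum⟩ := ih (↑(l.drop m)) (by
      simp [List.length_drop, hlen]
      ring_nf
      omega)
    refine ⟨Fin.cases (↑(l.take m)) f', ?_, ?_⟩
    · intro j
      refine Fin.cases ?_ ?_ j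
      · simp [List.length_take]
        omega
      · intro i; simpa using hf'card i
    · rw [Fin.sum_univ_succ]
      simp only [Fin.cases_zero, Fin.cases_succ]
      rw [hf'sum]
      rw [Multiset.coe_add, List.take_append_drop]
      rw [hl, Multiset.coe_toList]


lemma regular_packing (V : Type) [Fintype V] [DecidableEq V] :
    ∀ (m : ℕ) (M : V → Multiset ℕ), (∀ v, Multiset.card (M v) = m) →
    (∀ c, (∑ v, (M v).count c = 0 ∨ ∑ v, (M v).count c = m)) →
    ∃ a : Fin m → V → ℕ, (∀ i, Function.Injective (a i)) ∧
      ∀ v, (↑(List.ofFn (fun i => a i v)) : Multiset ℕ) = M v := by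
  intro m
  induction m with
  | zero =>
    intro M hM _
    refine ⟨fun i => i.elim0, fun i => i.elim0, fun v => ?_⟩
    simp
    exact (Multiset.card_eq_zero.mp (hM v)).symm
  | succ m ih =>
    intro M hM hreg
    set T : V → Finset ℕ := fun v => (M v).toFinset with hT
    -- sum of counts over a superset of the support equals card
    have hsum_card : ∀ (v : V) (U : Finset ℕ), (M v).toFinset ⊆ U →
        ∑ c ∈ U, (M v).count c = m + 1 := by
      intro v U hsub
      rw [← hM v, ← Multiset.toFinset_sum_count_eq (M v)]
      exact (Finset.sum_subset hsub (fun c _ hc =>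
        Multiset.count_eq_zero_of_notMem (by simpa using hc))).symm
    have hall : ∀ S : Finset V, S.card ≤ (S.biUnion T).card := by
      intro S
      set U := S.biUnion T with hU
      have e1 : ∑ v ∈ S, ∑ c ∈ U, (M v).count c = S.card * (m + 1) := by
        rw [Finset.sum_congr rfl
          (fun v hv => hsum_card v U (Finset.subset_biUnion_of_mem T hv))]
        simp [Finset.sum_const, mul_comm]
      have e2 : ∑ v ∈ S, ∑ c ∈ U, (M v).count c = ∑ c ∈ U, ∑ v ∈ S, (M v).count c :=
        Finset.sum_comm
      have e3 : ∑ c ∈ U, ∑ v ∈ S, (M v).count c ≤ U.card * (m + 1) := by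
        calc ∑ c ∈ U, ∑ v ∈ S, (M v).count c ≤ ∑ _c ∈ U, (m + 1) := by
              refine Finset.sum_le_sum (fun c _ => ?_)
              have h4 : ∑ v ∈ S, (M v).count c ≤ ∑ v, (M v).count c :=
                Finset.sum_le_sum_of_subset (Finset.subset_univ S)
              rcases hreg c with h | h <;> omega
          _ = U.card * (m + 1) := by simp [Finset.sum_const, mul_comm]
      have : S.card * (m + 1) ≤ U.card * (m + 1) := by omega
      exact Nat.le_of_mul_le_mul_right this (Nat.succ_pos m)
    obtain ⟨g, hg_inj, hg_mem⟩ :=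
      (Finset.all_card_le_biUnion_card_iff_exists_injective T).mp hall
    have hgM : ∀ v, g v ∈ M v := fun v => Multiset.mem_toFinset.mp (hg_mem v)
    set C : Finset ℕ := Finset.univ.biUnion T with hC
    have hCtot : ∀ c ∈ C, ∑ v, (M v).count c = m + 1 := by
      intro c hc
      obtain ⟨v, _, hv⟩ := Finset.mem_biUnion.mp hc
      have hpos : 0 < (M v).count c := Multiset.count_pos.mpr (Multiset.mem_toFinset.mp hv)
      have : 0 < ∑ v, (M v).count c :=
        lt_of_lt_of_le hpos (Finset.single_le_sum (f := fun v => (M v).count c)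
          (fun _ _ => Nat.zero_le _) (Finset.mem_univ v))
      rcases hreg c with h | h <;> omega
    have hCcard : C.card = Fintype.card V := by
      have e1 : ∑ c ∈ C, ∑ v, (M v).count c = C.card * (m + 1) := by
        rw [Finset.sum_congr rfl hCtot]
        simp [Finset.sum_const, mul_comm]
      have e2 : ∑ c ∈ C, ∑ v, (M v).count c = ∑ v, ∑ c ∈ C, (M v).count c :=
        Finset.sum_comm
      have e3 : ∑ v, ∑ c ∈ C, (M v).count c = Fintype.card V * (m + 1) := by
        rw [Finset.sum_congr rfl
          (fun v _ => hsum_card v C (Finset.subset_biUnion_of_mem T (Finset.mem_univ v)))]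
        simp [Finset.sum_const, mul_comm, Finset.card_univ]
      have : C.card * (m + 1) = Fintype.card V * (m + 1) := by omega
      exact Nat.eq_of_mul_eq_mul_right (Nat.succ_pos m) this
    have himg : Finset.univ.image g = C := by
      apply Finset.eq_of_subset_of_card_le
      · intro c hc
        obtain ⟨v, _, hv⟩ := Finset.mem_image.mp hc
        exact hv ▸ Finset.mem_biUnion.mpr ⟨v, Finset.mem_univ v, hg_mem v⟩
      · rw [Finset.card_image_of_injective _ hg_inj, Finset.card_univ, hCcard]
    set M' : V → Multiset ℕ := fun v => (M v).erase (g v) with hM'def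
    have hM'card : ∀ v, Multiset.card (M' v) = m := by
      intro v
      rw [hM'def]
      simp only
      rw [Multiset.card_erase_of_mem (hgM v), hM v]
      rfl
    have hreg' : ∀ c, ∑ v, (M' v).count c = 0 ∨ ∑ v, (M' v).count c = m := by
      intro c
      by_cases hc : c ∈ C
      · right
        obtain ⟨v0, _, hv0⟩ := Finset.mem_image.mp (himg ▸ hc)
        have hcount : ∀ v, v ≠ v0 → (M' v).count c = (M v).count c := by
          intro v hne
          apply Multiset.count_erase_of_ne
          intro h
          exact hne (hg_inj (by rw [hv0, ← h]))
        have hcount0 : (M' v0).count c + 1 = (M v0).count c := by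
          rw [hM'def]
          simp only
          rw [← hv0, Multiset.count_erase_self]
          have : 1 ≤ (M v0).count (g v0) := Multiset.one_le_count_iff_mem.mpr (hgM v0)
          omega
        have e1 : ∑ v, (M' v).count c =
            (M' v0).count c + ∑ v ∈ Finset.univ.erase v0, (M' v).count c :=
          (Finset.add_sum_erase _ _ (Finset.mem_univ v0)).symm
        have e2 : ∑ v, (M v).count c =
            (M v0).count c + ∑ v ∈ Finset.univ.erase v0, (M v).count c :=
          (Finset.add_sum_erase _ _ (Finset.mem_univ v0)).symm
        have e3 : ∑ v ∈ Finset.univ.erase v0, (M' v).count c =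
            ∑ v ∈ Finset.univ.erase v0, (M v).count c :=
          Finset.sum_congr rfl (fun v hv => hcount v (Finset.ne_of_mem_erase hv))
        have e4 := hCtot c hc
        rw [e1, e3]
        linarith
      · left
        refine Finset.sum_eq_zero (fun v _ => ?_)
        have h0 : (M v).count c = 0 := by
          rw [Multiset.count_eq_zero]
          intro hmem
          exact hc (Finset.mem_biUnion.mpr ⟨v, Finset.mem_univ v, Multiset.mem_toFinset.mpr hmem⟩)
        have h1 := Multiset.count_le_of_le c (Multiset.erase_le (g v) (M v))
        rw [hM'def]
        simp only
        omega
    obtain ⟨a', ha'_inj, ha'_col⟩ := ih M' hM'card hreg'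
    refine ⟨fun i v => Fin.cases (g v) (fun j => a' j v) i, ?_, ?_⟩
    · intro i
      refine Fin.cases ?_ ?_ i
      · simpa using hg_inj
      · intro j
        simpa using ha'_inj j
    · intro v
      rw [List.ofFn_succ]
      simp only [Fin.cases_zero, Fin.cases_succ]
      rw [← Multiset.cons_coe, ha'_col v]
      exact Multiset.cons_erase (hgM v)

/-- `f` is a proper `L`-coloring of `G`: every vertex gets a color from its list,
and adjacent vertices get different colors. -/
def IsProperListColoring {V : Type*} (G : SimpleGraph V) (L : V → Finset ℕ)
    (f : V → ℕ) : Prop :=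
  (∀ v, f v ∈ L v) ∧ ∀ u v, G.Adj u v → f u ≠ f v

/-- `f : Fin k → V → ℕ` is a proper `L`-packing of `G` of size `k`. -/
def IsProperListPacking {V : Type*} (G : SimpleGraph V) (L : V → Finset ℕ)
    {k : ℕ} (f : Fin k → V → ℕ) : Prop :=
  (∀ i, IsProperListColoring G L (f i)) ∧ ∀ i j (v : V), i ≠ j → f i v ≠ f j v

/-- If `m ≥ n ≥ 1` then every `m`-assignment for `K_n` admits a proper packing of size `m`. -/
theorem completeGraph_packing_of_le (n m : ℕ) (hn : 1 ≤ n) (hm : n ≤ m)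
    (L : Fin n → Finset ℕ) (hL : ∀ v, (L v).card = m) :
    ∃ f : Fin m → Fin n → ℕ, IsProperListPacking (⊤ : SimpleGraph (Fin n)) L f := by
  classical
  set C : Finset ℕ := Finset.univ.biUnion (fun v => L v) with hC
  set d : ℕ → ℕ := fun c => (Finset.univ.filter (fun v => c ∈ L v)).card with hd
  have hdn : ∀ c, d c ≤ n := fun c => by
    rw [hd]
    calc (Finset.univ.filter (fun v => c ∈ L v)).card ≤ (Finset.univ : Finset (Fin n)).card :=
          Finset.card_filter_le _ _
      _ = n := by simp
  have hdm : ∀ c, d c ≤ m := fun c => le_trans (hdn c) hm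
  have hLC : ∀ v, L v ⊆ C := fun v => Finset.subset_biUnion_of_mem _ (Finset.mem_univ v)
  have hnC : n ≤ C.card := by
    have h1 := Finset.card_le_card (hLC ⟨0, hn⟩)
    rw [hL] at h1
    omega
  have hsum_d : ∑ c ∈ C, d c = n * m := by
    have h1 : ∀ c, d c = ∑ v, if c ∈ L v then 1 else 0 := by
      intro c; rw [hd]; exact Finset.card_filter _ _
    calc ∑ c ∈ C, d c = ∑ c ∈ C, ∑ v, if c ∈ L v then 1 else 0 :=
          Finset.sum_congr rfl (fun c _ => h1 c)
      _ = ∑ v, ∑ c ∈ C, if c ∈ L v then 1 else 0 := Finset.sum_comm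
      _ = ∑ v : Fin n, m := by
          refine Finset.sum_congr rfl (fun v _ => ?_)
          rw [← Finset.card_filter, Finset.filter_mem_eq_inter,
            Finset.inter_eq_right.mpr (hLC v), hL v]
      _ = n * m := by simp [Finset.card_univ, mul_comm]
  have hdum_card : ∑ c ∈ C, (m - d c) = (C.card - n) * m := by
    have h1 : ∑ c ∈ C, (m - d c) + ∑ c ∈ C, d c = ∑ c ∈ C, m := by
      rw [← Finset.sum_add_distrib]
      exact Finset.sum_congr rfl (fun c _ => by have := hdm c; omega)
    rw [hsum_d] at h1
    have h2 : (∑ _c ∈ C, m) = C.card * m := by simp [mul_comm]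
    rw [h2] at h1
    rw [Nat.sub_mul]
    omega
  set K : ℕ := C.card - n with hK
  set D : Multiset ℕ := ∑ c ∈ C, Multiset.replicate (m - d c) c with hD
  have hDcard : Multiset.card D = K * m := by
    have hgen : ∀ s : Finset ℕ, Multiset.card (∑ c ∈ s, Multiset.replicate (m - d c) c)
        = ∑ c ∈ s, (m - d c) := by
      intro s
      induction s using Finset.cons_induction with
      | empty => simp
      | cons a s ha ih => simp [Finset.sum_cons, ih]
    rw [hD, hK, ← hdum_card]
    exact hgen C
  obtain ⟨cf, hcfcard, hcfsum⟩ := multiset_chunks m K D hDcard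
  set M : Fin n ⊕ Fin K → Multiset ℕ := Sum.elim (fun v => (L v).val) cf with hMdef
  have hMcard : ∀ x, Multiset.card (M x) = m := by
    rintro (v | j)
    · exact hL v
    · exact hcfcard j
  have hcountA : ∀ c, ∑ v, ((L v).val).count c = d c := by
    intro c
    simp only [hd]
    rw [Finset.card_filter]
    refine Finset.sum_congr rfl (fun v _ => ?_)
    rw [Multiset.count_eq_of_nodup (L v).nodup]
    rfl
  have hcountB : ∀ c, ∑ j, (cf j).count c = if c ∈ C then m - d c else 0 := by
    intro c
    rw [← Multiset.count_sum', hcfsum, hD]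
    rw [Multiset.count_sum']
    rw [Finset.sum_congr rfl (fun c' _ => Multiset.count_replicate c c' (m - d c'))]
    exact Finset.sum_ite_eq' C c (fun c' => m - d c')
  have hcount : ∀ c, (∑ x, (M x).count c = 0 ∨ ∑ x, (M x).count c = m) := by
    intro c
    rw [hMdef, Fintype.sum_sum_type]
    simp only [Sum.elim_inl, Sum.elim_inr]
    rw [hcountA, hcountB]
    by_cases hc : c ∈ C
    · right; rw [if_pos hc]; have := hdm c; omega
    · left
      rw [if_neg hc]
      have hd0 : d c = 0 := by
        rw [hd, Finset.card_eq_zero]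
        refine Finset.filter_eq_empty_iff.mpr (fun v _ hv => ?_)
        exact hc (hLC v hv)
      omega
  obtain ⟨a, ha_inj, ha_col⟩ := regular_packing (Fin n ⊕ Fin K) m M hMcard hcount
  refine ⟨fun i v => a i (Sum.inl v), ⟨fun i => ⟨fun v => ?_, fun u v huv => ?_⟩,
    fun i j v hij => ?_⟩⟩
  · have h := ha_col (Sum.inl v)
    have hmem : a i (Sum.inl v) ∈ (↑(List.ofFn (fun i => a i (Sum.inl v))) : Multiset ℕ) := by
      rw [Multiset.mem_coe, List.mem_ofFn]
      exact ⟨i, rfl⟩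
    rw [h] at hmem
    exact hmem
  · have hne : u ≠ v := (SimpleGraph.top_adj u v).mp huv
    intro hEq
    exact hne (Sum.inl_injective (ha_inj i hEq))
  · have h := ha_col (Sum.inl v)
    have hnd : (↑(List.ofFn (fun i => a i (Sum.inl v))) : Multiset ℕ).Nodup := by
      rw [h]; exact (L v).nodup
    rw [Multiset.coe_nodup, List.nodup_ofFn] at hnd
    intro hEq
    exact hij (hnd hEq)
end

section
/- For every finite simple graph G with at least one vertex, and every list assignment L for G in which every vertex receives a list of exactly |V(G)| colors, there exists a proper L-packing of G of size |V(G)|. In particular, the list packing number of any finite simple graph G satisfies χ*_ℓ(G) ≤ |V(G)|. -/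
open Finset

/-- Splitting off a sub-function with prescribed sum. -/
lemma exists_le_sum {B : Type*} [Fintype B] [DecidableEq B] (t : B → ℕ) (m : ℕ)
    (h : m ≤ ∑ b, t b) :
    ∃ s : B → ℕ, (∀ b, s b ≤ t b) ∧ ∑ b, s b = m := by
  induction m with
  | zero => exact ⟨fun _ => 0, fun b => Nat.zero_le _, by simp⟩
  | succ m ih =>
    obtain ⟨s, hs, hsum⟩ := ih (Nat.le_of_succ_le h)
    have hex : ∃ b, s b < t b := by
      by_contra hc
      push_neg at hc
      have : ∑ b, t b ≤ ∑ b, s b := Finset.sum_le_sum fun b _ => hc b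
      omega
    obtain ⟨b0, hb0⟩ := hex
    refine ⟨fun b => if b = b0 then s b + 1 else s b, fun b => ?_, ?_⟩
    · by_cases hb : b = b0
      · subst hb; simp; omega
      · simp [hb]; exact hs b
    · have : ∀ b, (if b = b0 then s b + 1 else s b) = s b + (if b = b0 then 1 else 0) := by
        intro b; split <;> simp
      simp only [this]
      rw [Finset.sum_add_distrib, hsum, Fintype.sum_ite_eq' b0 (fun _ => 1)]

/-- A matrix with prescribed row sums `n` and column sums `t`. -/
lemma exists_matrix_rowcol {B : Type*} [Fintype B] [DecidableEq B] (n : ℕ) :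
    ∀ (k : ℕ) (t : B → ℕ), ∑ b, t b = n * k →
    ∃ D : Fin k → B → ℕ, (∀ i, ∑ b, D i b = n) ∧ ∀ b, ∑ i, D i b = t b := by
  intro k
  induction k with
  | zero =>
    intro t ht
    refine ⟨Fin.elim0, fun i => i.elim0, fun b => ?_⟩
    simp only [Finset.univ_eq_empty, Finset.sum_empty]
    have : t b ≤ ∑ b, t b := Finset.single_le_sum (fun _ _ => Nat.zero_le _) (mem_univ b)
    omega
  | succ k ih =>
    intro t ht
    obtain ⟨s, hs, hsum⟩ := exists_le_sum t n (by rw [ht, Nat.mul_succ]; omega)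
    obtain ⟨D, hD1, hD2⟩ := ih (fun b => t b - s b) (by
      rw [Finset.sum_tsub_distrib _ (fun b _ => hs b), hsum, ht, Nat.mul_succ]
      omega)
    refine ⟨Fin.cons s D, fun i => ?_, fun b => ?_⟩
    · refine Fin.cases ?_ ?_ i
      · simpa using hsum
      · intro j; simpa using hD1 j
    · rw [Fin.sum_univ_succ]
      simp only [Fin.cons_zero, Fin.cons_succ]
      have := hD2 b
      have := hs b
      omega

/-- Decomposition of an `n`-regular bipartite multigraph into `n` perfect matchings. -/
lemma decomp {A B : Type*} [Fintype A] [Fintype B] [DecidableEq A] [DecidableEq B] :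
    ∀ (n : ℕ) (N : A → B → ℕ), (∀ a, ∑ b, N a b = n) → (∀ b, ∑ a, N a b = n) →
    ∃ σ : Fin n → A → B, (∀ i, Function.Injective (σ i)) ∧
      ∀ a b, (Finset.univ.filter (fun i => σ i a = b)).card ≤ N a b := by
  intro n
  induction n with
  | zero =>
    intro N _ _
    exact ⟨Fin.elim0, fun i => i.elim0, fun a b => by simp⟩
  | succ n ih =>
    intro N hrow hcol
    have hall : ∀ s : Finset A,
        s.card ≤ (s.biUnion (fun a => univ.filter (fun b => 0 < N a b))).card := by
      intro s
      have h1 : (n+1) * s.card ≤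
          (n+1) * (s.biUnion (fun a => univ.filter (fun b => 0 < N a b))).card := by
        calc (n+1) * s.card = ∑ _a ∈ s, (n+1) := by rw [Finset.sum_const]; ring
        _ = ∑ a ∈ s, ∑ b, N a b := Finset.sum_congr rfl fun a _ => (hrow a).symm
        _ = ∑ a ∈ s, ∑ b ∈ s.biUnion (fun a => univ.filter (fun b => 0 < N a b)), N a b := by
            refine Finset.sum_congr rfl fun a ha => ?_
            refine (Finset.sum_subset (Finset.subset_univ _) fun b _ hb => ?_).symm
            by_contra hN
            exact hb (Finset.mem_biUnion.2
              ⟨a, ha, Finset.mem_filter.2 ⟨mem_univ b, Nat.pos_of_ne_zero hN⟩⟩)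
        _ = ∑ b ∈ s.biUnion (fun a => univ.filter (fun b => 0 < N a b)), ∑ a ∈ s, N a b :=
            Finset.sum_comm
        _ ≤ ∑ _b ∈ s.biUnion (fun a => univ.filter (fun b => 0 < N a b)), (n+1) := by
            refine Finset.sum_le_sum fun b _ => ?_
            rw [← hcol b]
            exact Finset.sum_le_sum_of_subset (Finset.subset_univ s)
        _ = _ := by rw [Finset.sum_const]; ring
      exact Nat.le_of_mul_le_mul_left h1 (Nat.succ_pos n)
    obtain ⟨σ0, hσ0inj, hσ0mem⟩ := (Finset.all_card_le_biUnion_card_iff_exists_injective _).1 hall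
    have hσ0pos : ∀ a, 0 < N a (σ0 a) := fun a => (Finset.mem_filter.1 (hσ0mem a)).2
    have hcard : Fintype.card A = Fintype.card B := by
      have h1 : ∑ a, ∑ b, N a b = (n+1) * Fintype.card A := by
        rw [Finset.sum_congr rfl fun a _ => hrow a, Finset.sum_const, Fintype.card, smul_eq_mul]
        ring
      have h2 : ∑ a, ∑ b, N a b = (n+1) * Fintype.card B := by
        rw [Finset.sum_comm, Finset.sum_congr rfl fun b _ => hcol b, Finset.sum_const,
          Fintype.card, smul_eq_mul]
        ring
      exact Nat.eq_of_mul_eq_mul_left (Nat.succ_pos n) (h1.symm.trans h2)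
    have hσ0surj : Function.Surjective σ0 :=
      ((Fintype.bijective_iff_injective_and_card σ0).2 ⟨hσ0inj, hcard⟩).2
    set N' : A → B → ℕ := fun a b => N a b - (if σ0 a = b then 1 else 0) with hN'
    have hle : ∀ a b, (if σ0 a = b then 1 else 0) ≤ N a b := by
      intro a b
      split
      · next h => rw [← h]; exact hσ0pos a
      · exact Nat.zero_le _
    have hrow' : ∀ a, ∑ b, N' a b = n := by
      intro a
      rw [Finset.sum_tsub_distrib _ (fun b _ => hle a b), hrow a,
        Fintype.sum_ite_eq (σ0 a) (fun _ => 1)]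
      omega
    have hcol' : ∀ b, ∑ a, N' a b = n := by
      intro b
      obtain ⟨a0, ha0⟩ := hσ0surj b
      have key : ∑ a, (if σ0 a = b then 1 else 0) = 1 := by
        have : ∀ a, (if σ0 a = b then (1:ℕ) else 0) = if a = a0 then 1 else 0 := by
          intro a
          refine if_congr ?_ rfl rfl
          constructor
          · intro h; exact hσ0inj (h.trans ha0.symm)
          · intro h; rw [h, ha0]
        simp only [this]
        rw [Fintype.sum_ite_eq' a0 (fun _ => 1)]
      rw [Finset.sum_tsub_distrib _ (fun a _ => hle a b), hcol b, key]
      omega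
    obtain ⟨σ', hσ'inj, hσ'count⟩ := ih N' hrow' hcol'
    set τ : Fin (n+1) → A → B := Fin.cons σ0 σ' with hτ
    refine ⟨τ, fun i => ?_, fun a b => ?_⟩
    · refine Fin.cases ?_ ?_ i
      · simpa [hτ] using hσ0inj
      · intro j; simpa [hτ] using hσ'inj j
    · rw [Fin.card_filter_univ_succ' (fun i : Fin (n+1) => τ i a = b)]
      simp only [hτ, Fin.cons_zero, Fin.cons_succ]
      have h1 := hσ'count a b
      have h2 := hle a b
      have h1' : #(filter (fun i => σ' i a = b) univ) ≤ N a b - (if σ0 a = b then 1 else 0) := h1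
      by_cases hb : σ0 a = b <;> simp only [hb, if_true, if_false, if_pos, if_neg, not_false_iff] at h1' h2 ⊢ <;> omega


/-- For any finite graph `G` with at least one vertex, every `|V(G)|`-assignment admits a
proper packing of size `|V(G)|`; hence `χ*_ℓ(G) ≤ |V(G)|`. -/
theorem listPacking_card_vertices {V : Type*} [Fintype V] [Nonempty V]
    (G : SimpleGraph V) (L : V → Finset ℕ) (hL : ∀ v, (L v).card = Fintype.card V) :
    ∃ f : Fin (Fintype.card V) → V → ℕ, IsProperListPacking G L f := by
  classical
  set n := Fintype.card V with hn
  set C : Finset ℕ := Finset.univ.biUnion L with hC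
  have hLC : ∀ v, L v ⊆ C := fun v x hx => Finset.mem_biUnion.2 ⟨v, mem_univ v, hx⟩
  set m := C.card with hm
  have hcardC : Fintype.card {x // x ∈ C} = m := Fintype.card_coe C
  have hnm : n ≤ m := by
    obtain ⟨v⟩ := (inferInstance : Nonempty V)
    calc n = (L v).card := (hL v).symm
    _ ≤ m := Finset.card_le_card (hLC v)
  -- row sums for real vertices
  have rowL : ∀ v : V, ∑ c : {x // x ∈ C}, (if (c : ℕ) ∈ L v then 1 else 0) = n := by
    intro v
    rw [← Finset.sum_subtype C (fun x => Iff.rfl) (fun x => if x ∈ L v then 1 else 0)]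
    rw [← Finset.card_filter]
    have : C.filter (fun x => x ∈ L v) = L v := by
      ext x
      simp only [Finset.mem_filter, and_iff_right_iff_imp]
      exact fun hx => hLC v hx
    rw [this, hL v]
  -- degrees of colors
  set d : {x // x ∈ C} → ℕ := fun c => ∑ v : V, (if (c : ℕ) ∈ L v then 1 else 0) with hd
  have hdle : ∀ c, d c ≤ n := by
    intro c
    calc d c ≤ ∑ _v : V, 1 := Finset.sum_le_sum (fun v _ => by split <;> omega)
    _ = n := by simp [hn]
  have hsum_d : ∑ c : {x // x ∈ C}, d c = n * n := by
    rw [hd]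
    rw [Finset.sum_comm]
    rw [Finset.sum_congr rfl fun v _ => rowL v]
    simp [hn, Nat.mul_comm]
  -- the dummy matrix
  obtain ⟨D, hD1, hD2⟩ := exists_matrix_rowcol n (m - n) (fun c => n - d c) (by
    rw [Finset.sum_tsub_distrib _ (fun c _ => hdle c), hsum_d]
    rw [Finset.sum_const, smul_eq_mul, Finset.card_univ, hcardC, Nat.mul_comm m n]
    have : n * (m - n) + n * n = n * m := by rw [← Nat.mul_add, Nat.sub_add_cancel hnm]
    omega)
  -- the regular bipartite multigraph
  set N : (V ⊕ Fin (m - n)) → {x // x ∈ C} → ℕ := fun a c =>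
    Sum.elim (fun v => if (c : ℕ) ∈ L v then 1 else 0) (fun j => D j c) a with hN
  have hrow : ∀ a, ∑ c, N a c = n := by
    rintro (v | j)
    · exact rowL v
    · exact hD1 j
  have hcol : ∀ c, ∑ a, N a c = n := by
    intro c
    rw [Fintype.sum_sum_type]
    simp only [hN, Sum.elim_inl, Sum.elim_inr]
    rw [hD2 c]
    have h1 : ∑ v : V, (if (c : ℕ) ∈ L v then 1 else 0) = d c := rfl
    rw [h1]
    have := hdle c
    omega
  obtain ⟨σ, hσinj, hσcount⟩ := decomp n N hrow hcol
  refine ⟨fun i v => (σ i (Sum.inl v) : ℕ), ⟨fun i => ⟨fun v => ?_, fun u v huv hfe => ?_⟩,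
    fun i j v hij hfe => ?_⟩⟩
  · -- membership
    have hpos : 0 < (univ.filter (fun j => σ j (Sum.inl v) = σ i (Sum.inl v))).card :=
      Finset.card_pos.2 ⟨i, Finset.mem_filter.2 ⟨mem_univ i, rfl⟩⟩
    have := lt_of_lt_of_le hpos (hσcount (Sum.inl v) (σ i (Sum.inl v)))
    simp only [hN, Sum.elim_inl] at this
    by_contra hmem
    rw [if_neg hmem] at this
    exact Nat.lt_irrefl 0 this
  · -- properness
    have : σ i (Sum.inl u) = σ i (Sum.inl v) := Subtype.ext hfe
    have := hσinj i this
    simp only [Sum.inl.injEq] at this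
    exact G.ne_of_adj huv this
  · -- packing
    have hbe : σ i (Sum.inl v) = σ j (Sum.inl v) := Subtype.ext hfe
    set b := σ i (Sum.inl v) with hb
    have hsub : ({i, j} : Finset (Fin n)) ⊆ univ.filter (fun k => σ k (Sum.inl v) = b) := by
      intro k hk
      rcases Finset.mem_insert.1 hk with h | h
      · exact Finset.mem_filter.2 ⟨mem_univ k, by rw [h]⟩
      · rw [Finset.mem_singleton.1 h]
        exact Finset.mem_filter.2 ⟨mem_univ j, hbe.symm⟩
    have h2 : 2 ≤ (univ.filter (fun k => σ k (Sum.inl v) = b)).card := by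
      calc 2 = ({i, j} : Finset (Fin n)).card := by
              rw [Finset.card_insert_of_notMem (by simpa using hij), Finset.card_singleton]
      _ ≤ _ := Finset.card_le_card hsub
    have := le_trans h2 (hσcount (Sum.inl v) b)
    simp only [hN, Sum.elim_inl] at this
    split at this <;> omega
end

section
/- Let m ≥ n ≥ 1. The list chromatic number of the Cartesian product K_n □ K_m of complete graphs equals m. That is, for every list assignment L for K_n □ K_m in which every vertex receives a list of exactly m colors there exists a proper L-coloring, and there exists a list assignment giving every vertex exactly m − 1 colors for which no proper coloring from the lists exists. -/
open Finset

namespace GalvinGrid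

variable {n m : ℕ}

/-- The "color" of a cell in a canonical proper edge coloring of `K_{n,m}`. -/
def rk (v : Fin n × Fin m) : ℕ := ((v.1 : ℕ) + (v.2 : ℕ)) % m

/-- `u` is an out-neighbor of `v` in Galvin's orientation. -/
def outRel (v u : Fin n × Fin m) : Prop :=
  (v.1 = u.1 ∧ rk v < rk u) ∨ (v.2 = u.2 ∧ rk u < rk v)

instance (v u : Fin n × Fin m) : Decidable (outRel v u) := by
  unfold outRel; infer_instance

lemma m_pos (v : Fin n × Fin m) : 0 < m := lt_of_le_of_lt (Nat.zero_le _) v.2.isLt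

lemma rk_lt (v : Fin n × Fin m) : rk v < m := Nat.mod_lt _ (m_pos v)

lemma rk_inj_row {v u : Fin n × Fin m} (h1 : v.1 = u.1) (h2 : rk v = rk u) : v = u := by
  unfold rk at h2
  rw [h1] at h2
  have h3 : (v.2 : ℕ) ≡ (u.2 : ℕ) [MOD m] := Nat.ModEq.add_left_cancel' (u.1 : ℕ) h2
  have h4 : (v.2 : ℕ) = (u.2 : ℕ) := by
    have := h3
    unfold Nat.ModEq at this
    rwa [Nat.mod_eq_of_lt v.2.isLt, Nat.mod_eq_of_lt u.2.isLt] at this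
  exact Prod.ext h1 (Fin.ext h4)

lemma rk_inj_col (hnm : n ≤ m) {v u : Fin n × Fin m} (h1 : v.2 = u.2) (h2 : rk v = rk u) :
    v = u := by
  unfold rk at h2
  rw [h1] at h2
  have h3 : (v.1 : ℕ) ≡ (u.1 : ℕ) [MOD m] := Nat.ModEq.add_right_cancel' (u.2 : ℕ) h2
  have h4 : (v.1 : ℕ) = (u.1 : ℕ) := by
    unfold Nat.ModEq at h3
    rwa [Nat.mod_eq_of_lt (lt_of_lt_of_le v.1.isLt hnm),
      Nat.mod_eq_of_lt (lt_of_lt_of_le u.1.isLt hnm)] at h3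
  exact Prod.ext (Fin.ext h4) h1

/-- Out-degree of `v` inside `S` in Galvin's orientation. -/
def outdeg (S : Finset (Fin n × Fin m)) (v : Fin n × Fin m) : ℕ :=
  ((S.erase v).filter (fun u => outRel v u)).card

lemma outdeg_mono {S T : Finset (Fin n × Fin m)} (h : S ⊆ T) (v : Fin n × Fin m) :
    outdeg S v ≤ outdeg T v :=
  card_le_card (filter_subset_filter _ (erase_subset_erase _ h))

lemma outdeg_le (hnm : n ≤ m) (S : Finset (Fin n × Fin m)) (v : Fin n × Fin m) :
    outdeg S v ≤ m - 1 := by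
  classical
  set A : Finset (Fin n × Fin m) :=
    univ.filter (fun u => v.1 = u.1 ∧ rk v < rk u) with hA
  set B : Finset (Fin n × Fin m) :=
    univ.filter (fun u => v.2 = u.2 ∧ rk u < rk v) with hB
  have hsub : (S.erase v).filter (fun u => outRel v u) ⊆ A ∪ B := by
    intro u hu
    rcases (mem_filter.1 hu).2 with h | h
    · exact mem_union_left _ (mem_filter.2 ⟨mem_univ _, h⟩)
    · exact mem_union_right _ (mem_filter.2 ⟨mem_univ _, h⟩)
  have hAcard : A.card ≤ m - (rk v + 1) := by
    have := Finset.card_le_card_of_injOn (s := A) (t := Finset.Ico (rk v + 1) m) rk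
      (fun u hu => by
        have h := (mem_filter.1 hu).2
        exact Finset.mem_Ico.2 ⟨h.2, rk_lt u⟩)
      (fun u hu u' hu' h => by
        have h1 := (mem_filter.1 (by exact_mod_cast hu)).2
        have h2 := (mem_filter.1 (by exact_mod_cast hu')).2
        exact rk_inj_row (h1.1.symm.trans h2.1) h)
    simpa [Nat.card_Ico] using this
  have hBcard : B.card ≤ rk v := by
    have := Finset.card_le_card_of_injOn (s := B) (t := Finset.range (rk v)) rk
      (fun u hu => by
        have h := (mem_filter.1 hu).2
        exact Finset.mem_range.2 h.2)
      (fun u hu u' hu' h => by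
        have h1 := (mem_filter.1 (by exact_mod_cast hu)).2
        have h2 := (mem_filter.1 (by exact_mod_cast hu')).2
        exact rk_inj_col hnm (h1.1.symm.trans h2.1) h)
    simpa using this
  have h1 : outdeg S v ≤ A.card + B.card :=
    le_trans (card_le_card hsub) (card_union_le _ _)
  have h2 : rk v < m := rk_lt v
  omega

/-- Every induced subdigraph of Galvin's orientation has a kernel. -/
lemma kernel_exists (hnm : n ≤ m) (S : Finset (Fin n × Fin m)) :
    ∃ K, K ⊆ S ∧
      (∀ k ∈ K, ∀ k' ∈ K, k ≠ k' → ¬(k.1 = k'.1 ∨ k.2 = k'.2)) ∧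
      (∀ v ∈ S, v ∉ K → ∃ k ∈ K, outRel v k) := by
  classical
  induction S using Finset.strongInduction with
  | _ S ih =>
    set K₀ := S.filter (fun v => ∀ u ∈ S, u.1 = v.1 → rk u ≤ rk v) with hK₀
    by_cases hcol : ∀ k ∈ K₀, ∀ k' ∈ K₀, k ≠ k' → k.2 ≠ k'.2
    · refine ⟨K₀, filter_subset _ _, ?_, ?_⟩
      · intro k hk k' hk' hne
        rintro (h1 | h2)
        · have ha := (mem_filter.1 hk).2 k' (mem_filter.1 hk').1 h1.symm
          have hb := (mem_filter.1 hk').2 k (mem_filter.1 hk).1 h1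
          exact hne (rk_inj_row h1 (le_antisymm hb ha))
        · exact hcol k hk k' hk' hne h2
      · intro v hv hvK
        have hR : (S.filter (fun u => u.1 = v.1)).Nonempty := ⟨v, mem_filter.2 ⟨hv, rfl⟩⟩
        obtain ⟨w, hwR, hwmax⟩ := Finset.exists_max_image _ rk hR
        have hwS : w ∈ S := (mem_filter.1 hwR).1
        have hw1 : w.1 = v.1 := (mem_filter.1 hwR).2
        have hwK : w ∈ K₀ :=
          mem_filter.2 ⟨hwS, fun u hu h => hwmax u (mem_filter.2 ⟨hu, h.trans hw1⟩)⟩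
        have hvw : v ≠ w := fun h => hvK (h ▸ hwK)
        have hle : rk v ≤ rk w := hwmax v (mem_filter.2 ⟨hv, rfl⟩)
        have hlt : rk v < rk w :=
          lt_of_le_of_ne hle (fun h => hvw (rk_inj_row hw1.symm h))
        exact ⟨w, hwK, Or.inl ⟨hw1.symm, hlt⟩⟩
    · push_neg at hcol
      obtain ⟨k, hk, k', hk', hne, hc⟩ := hcol
      have key : ∀ a b : Fin n × Fin m, a ∈ K₀ → b ∈ K₀ → a.2 = b.2 → rk a < rk b →
          ∃ K, K ⊆ S ∧
            (∀ k ∈ K, ∀ k' ∈ K, k ≠ k' → ¬(k.1 = k'.1 ∨ k.2 = k'.2)) ∧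
            (∀ v ∈ S, v ∉ K → ∃ k ∈ K, outRel v k) := by
        intro a b ha hb hab hrk
        have hbS : b ∈ S := (mem_filter.1 hb).1
        have haS : a ∈ S := (mem_filter.1 ha).1
        obtain ⟨K, hKsub, hInd, hDom⟩ := ih _ (erase_ssubset hbS)
        refine ⟨K, hKsub.trans (erase_subset _ _), hInd, ?_⟩
        intro v hv hvK
        by_cases hvb : v = b
        · subst hvb
          have hanb : a ≠ v := fun h => (ne_of_lt hrk) (by rw [h])
          by_cases haK : a ∈ K
          · exact ⟨a, haK, Or.inr ⟨hab.symm, hrk⟩⟩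
          · have haS' : a ∈ S.erase v := mem_erase.2 ⟨hanb, haS⟩
            obtain ⟨w, hwK, hw⟩ := hDom a haS' haK
            rcases hw with ⟨h1, h2⟩ | ⟨h1, h2⟩
            · have hwS : w ∈ S := (erase_subset _ _) (hKsub hwK)
              have := (mem_filter.1 ha).2 w hwS h1.symm
              omega
            · exact ⟨w, hwK, Or.inr ⟨hab.symm.trans h1, h2.trans hrk⟩⟩
        · exact hDom v (mem_erase.2 ⟨hvb, hv⟩) hvK
      have hrkne : rk k ≠ rk k' := fun h => hne (rk_inj_col hnm hc h)
      rcases lt_or_gt_of_ne hrkne with h | h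
      · exact key k k' hk hk' hc h
      · exact key k' k hk' hk hc.symm h

/-- Galvin's list coloring argument: if every vertex of `S` has more colors than
out-neighbors in `S`, then `S` admits a proper coloring from the lists. -/
lemma color_exists (hnm : n ≤ m) :
    ∀ (N : ℕ) (S : Finset (Fin n × Fin m)) (L : Fin n × Fin m → Finset ℕ),
      (∑ v ∈ S, (L v).card) ≤ N →
      (∀ v ∈ S, outdeg S v < (L v).card) →
      ∃ f : Fin n × Fin m → ℕ, ∀ v ∈ S, f v ∈ L v ∧
        ∀ u ∈ S, u ≠ v → (u.1 = v.1 ∨ u.2 = v.2) → f u ≠ f v := by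
  classical
  intro N
  induction N with
  | zero =>
    intro S L hsum hdeg
    rcases S.eq_empty_or_nonempty with rfl | ⟨v₀, hv₀⟩
    · exact ⟨fun _ => 0, by simp⟩
    · exfalso
      have h1 := hdeg v₀ hv₀
      have h2 : (L v₀).card ≤ ∑ v ∈ S, (L v).card :=
        Finset.single_le_sum (f := fun v => (L v).card) (fun _ _ => Nat.zero_le _) hv₀
      omega
  | succ N ihN =>
    intro S L hsum hdeg
    rcases S.eq_empty_or_nonempty with rfl | ⟨v₀, hv₀⟩
    · exact ⟨fun _ => 0, by simp⟩
    have hc0 : (L v₀).Nonempty := card_pos.1 (lt_of_le_of_lt (Nat.zero_le _) (hdeg v₀ hv₀))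
    obtain ⟨c, hc⟩ := hc0
    set T := S.filter (fun v => c ∈ L v) with hT
    obtain ⟨K, hKT, hInd, hDom⟩ := kernel_exists hnm T
    have hKS : K ⊆ S := hKT.trans (filter_subset _ _)
    have hKne : K.Nonempty := by
      by_cases h : v₀ ∈ K
      · exact ⟨v₀, h⟩
      · obtain ⟨k, hk, -⟩ := hDom v₀ (mem_filter.2 ⟨hv₀, hc⟩) h
        exact ⟨k, hk⟩
    set S' := S \ K with hS'
    have hdeg' : ∀ v ∈ S', outdeg S' v < ((L v).erase c).card := by
      intro v hv
      have hvS : v ∈ S := (mem_sdiff.1 hv).1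
      have hvK : v ∉ K := (mem_sdiff.1 hv).2
      have hmono : outdeg S' v ≤ outdeg S v := outdeg_mono sdiff_subset v
      by_cases hcv : c ∈ L v
      · have hvT : v ∈ T := mem_filter.2 ⟨hvS, hcv⟩
        obtain ⟨k, hkK, hout⟩ := hDom v hvT hvK
        have hkne : k ≠ v := fun h => hvK (h ▸ hkK)
        have hkmem : k ∈ (S.erase v).filter (fun u => outRel v u) :=
          mem_filter.2 ⟨mem_erase.2 ⟨hkne, hKS hkK⟩, hout⟩
        have hknot : k ∉ (S'.erase v).filter (fun u => outRel v u) := by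
          intro h
          exact (mem_sdiff.1 (mem_erase.1 (mem_filter.1 h).1).2).2 hkK
        have hstrict : outdeg S' v < outdeg S v :=
          card_lt_card ((Finset.ssubset_iff_of_subset
            (filter_subset_filter _ (erase_subset_erase _ sdiff_subset))).2 ⟨k, hkmem, hknot⟩)
        have h3 : ((L v).erase c).card = (L v).card - 1 := card_erase_of_mem hcv
        have h4 : 1 ≤ (L v).card := card_pos.2 ⟨c, hcv⟩
        have h5 := hdeg v hvS
        omega
      · rw [erase_eq_of_notMem hcv]
        exact lt_of_le_of_lt hmono (hdeg v hvS)
    have hsum' : (∑ v ∈ S', ((L v).erase c).card) ≤ N := by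
      obtain ⟨k₀, hk₀⟩ := hKne
      have hk₀S : k₀ ∈ S := hKS hk₀
      have hk₀S' : k₀ ∉ S' := fun h => (mem_sdiff.1 h).2 hk₀
      have h1 : (∑ v ∈ S', ((L v).erase c).card) ≤ ∑ v ∈ S', (L v).card :=
        Finset.sum_le_sum (fun v _ => card_le_card (erase_subset _ _))
      have h2 : (∑ v ∈ S', (L v).card) < ∑ v ∈ S, (L v).card :=
        Finset.sum_lt_sum_of_subset sdiff_subset hk₀S hk₀S'
          (card_pos.2 ⟨c, (mem_filter.1 (hKT hk₀)).2⟩) (fun _ _ _ => Nat.zero_le _)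
      omega
    obtain ⟨f', hf'⟩ := ihN S' (fun v => (L v).erase c) hsum' hdeg'
    refine ⟨fun v => if v ∈ K then c else f' v, ?_⟩
    intro v hv
    by_cases hvK : v ∈ K
    · refine ⟨?_, ?_⟩
      · show (if v ∈ K then c else f' v) ∈ L v
        rw [if_pos hvK]
        exact (mem_filter.1 (hKT hvK)).2
      · intro u hu hne hline
        by_cases huK : u ∈ K
        · exact absurd hline (hInd u huK v hvK hne)
        · have huS' : u ∈ S' := mem_sdiff.2 ⟨hu, huK⟩
          show (if u ∈ K then c else f' u) ≠ (if v ∈ K then c else f' v)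
          rw [if_neg huK, if_pos hvK]
          intro h
          exact Finset.notMem_erase c (L u) (h ▸ (hf' u huS').1)
    · have hvS' : v ∈ S' := mem_sdiff.2 ⟨hv, hvK⟩
      refine ⟨?_, ?_⟩
      · show (if v ∈ K then c else f' v) ∈ L v
        rw [if_neg hvK]
        exact (erase_subset _ _) (hf' v hvS').1
      · intro u hu hne hline
        by_cases huK : u ∈ K
        · show (if u ∈ K then c else f' u) ≠ (if v ∈ K then c else f' v)
          rw [if_pos huK, if_neg hvK]
          intro h
          have hx := (hf' v hvS').1
          rw [← h] at hx
          exact Finset.notMem_erase c (L v) hx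
        · have huS' : u ∈ S' := mem_sdiff.2 ⟨hu, huK⟩
          show (if u ∈ K then c else f' u) ≠ (if v ∈ K then c else f' v)
          rw [if_neg huK, if_neg hvK]
          exact (hf' v hvS').2 u huS' hne hline

end GalvinGrid

/-- For `m ≥ n ≥ 1`, the list chromatic number of `K_n □ K_m` equals `m`: every
`m`-assignment admits a proper coloring, and some `(m-1)`-assignment does not. -/
theorem listChromaticNumber_boxProd_complete (n m : ℕ) (hn : 1 ≤ n) (hm : n ≤ m) :
    (∀ L : Fin n × Fin m → Finset ℕ, (∀ v, (L v).card = m) →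
      ∃ f : Fin n × Fin m → ℕ,
        IsProperListColoring ((⊤ : SimpleGraph (Fin n)) □ (⊤ : SimpleGraph (Fin m))) L f) ∧
    (∃ L : Fin n × Fin m → Finset ℕ, (∀ v, (L v).card = m - 1) ∧
      ¬ ∃ f : Fin n × Fin m → ℕ,
        IsProperListColoring ((⊤ : SimpleGraph (Fin n)) □ (⊤ : SimpleGraph (Fin m))) L f) := by
  have hm1 : 1 ≤ m := le_trans hn hm
  constructor
  · intro L hL
    have hdeg : ∀ v ∈ (univ : Finset (Fin n × Fin m)), GalvinGrid.outdeg univ v < (L v).card := by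
      intro v _
      have h1 := GalvinGrid.outdeg_le hm univ v
      rw [hL v]
      omega
    obtain ⟨f, hf⟩ := GalvinGrid.color_exists hm
      (∑ v ∈ (univ : Finset (Fin n × Fin m)), (L v).card) univ L le_rfl hdeg
    refine ⟨f, fun v => (hf v (mem_univ v)).1, ?_⟩
    intro u v huv
    have hne : u ≠ v := huv.ne
    have hline : u.1 = v.1 ∨ u.2 = v.2 := by
      rcases (SimpleGraph.boxProd_adj).1 huv with ⟨_, h2⟩ | ⟨_, h2⟩
      · exact Or.inr h2
      · exact Or.inl h2
    exact (hf v (mem_univ v)).2 u (mem_univ u) hne hline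
  · refine ⟨fun _ => Finset.range (m - 1), fun _ => Finset.card_range _, ?_⟩
    rintro ⟨f, hmem, hadj⟩
    set i₀ : Fin n := ⟨0, hn⟩
    have hinj : Set.InjOn (fun j : Fin m => f (i₀, j)) ↑(univ : Finset (Fin m)) := by
      intro j _ j' _ h
      by_contra hne
      exact hadj (i₀, j) (i₀, j')
        (SimpleGraph.boxProd_adj.2 (Or.inr ⟨(SimpleGraph.top_adj j j').2 hne, rfl⟩)) h
    have hcard := Finset.card_le_card_of_injOn (fun j : Fin m => f (i₀, j))
      (fun j _ => hmem (i₀, j)) hinj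
    simp only [Finset.card_univ, Fintype.card_fin, Finset.card_range] at hcard
    omega
end
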